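/- Let n be a natural number, S : Fin n → ℤ any function, and r : Fin n → Fin n the stable-rank bijection r(i) = #{j | S j < S i} + #{j | j < i ∧ S j = S i}. Then rearranging the list by placing the element at position i into position r(i) sorts it: the function i ↦ S(r⁻¹(i)) is monotone non-decreasing on Fin n. -/
import Mathlib


theorem stmt_10 (n : ℕ) (S : Fin n → ℤ) (r : Equiv.Perm (Fin n))
    (hr : ∀ i : Fin n,
      (r i : ℕ) = (Finset.univ.filter (fun j : Fin n => S j < S i)).card +
            (Finset.univ.filter (fun j : Fin n => j < i ∧ S j = S i)).card) :
    Monotone (fun i : Fin n => S (r.symm i)) := by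
  have key : ∀ i j : Fin n, S i < S j ∨ (S i = S j ∧ i < j) → (r i : ℕ) < (r j : ℕ) := by
    intro i j h
    have hri := hr i
    have hrj := hr j
    rcases h with h | ⟨heq, hlt⟩
    · set A := Finset.univ.filter (fun k : Fin n => S k < S i) with hA
      set B := Finset.univ.filter (fun k : Fin n => k < i ∧ S k = S i) with hB
      have hdisj : Disjoint A B := by
        rw [Finset.disjoint_left]
        intro k hkA hkB
        simp only [hA, hB, Finset.mem_filter, Finset.mem_univ, true_and] at hkA hkB
        omega
      have hiAB : i ∉ A ∪ B := by
        simp only [Finset.mem_union, hA, hB, Finset.mem_filter, Finset.mem_univ, true_and]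
        omega
      have hsub : insert i (A ∪ B) ⊆ Finset.univ.filter (fun k : Fin n => S k < S j) := by
        intro k hk
        simp only [Finset.mem_insert, Finset.mem_union] at hk
        simp only [Finset.mem_filter, Finset.mem_univ, true_and]
        rcases hk with rfl | hk | hk
        · exact h
        · simp only [hA, Finset.mem_filter, Finset.mem_univ, true_and] at hk; omega
        · simp only [hB, Finset.mem_filter, Finset.mem_univ, true_and] at hk; omega
      have hcard : A.card + B.card + 1 ≤
          (Finset.univ.filter (fun k : Fin n => S k < S j)).card := by
        calc A.card + B.card + 1 = (insert i (A ∪ B)).card := by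
              rw [Finset.card_insert_of_notMem hiAB, Finset.card_union_of_disjoint hdisj]
          _ ≤ _ := Finset.card_le_card hsub
      omega
    · have hEq : (Finset.univ.filter (fun k : Fin n => S k < S i)) =
          (Finset.univ.filter (fun k : Fin n => S k < S j)) := by
        apply Finset.filter_congr
        intro k _
        rw [heq]
      rw [hEq] at hri
      set B := Finset.univ.filter (fun k : Fin n => k < i ∧ S k = S i) with hB
      have hiB : i ∉ B := by
        simp only [hB, Finset.mem_filter, Finset.mem_univ, true_and]
        exact fun h' => absurd h'.1 (lt_irrefl _)
      have hsub : insert i B ⊆ Finset.univ.filter (fun k : Fin n => k < j ∧ S k = S j) := by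
        intro k hk
        simp only [Finset.mem_insert] at hk
        simp only [Finset.mem_filter, Finset.mem_univ, true_and]
        rcases hk with rfl | hk
        · exact ⟨hlt, heq⟩
        · simp only [hB, Finset.mem_filter, Finset.mem_univ, true_and] at hk
          exact ⟨lt_trans hk.1 hlt, hk.2.trans heq⟩
      have hcard : B.card + 1 ≤
          (Finset.univ.filter (fun k : Fin n => k < j ∧ S k = S j)).card := by
        calc B.card + 1 = (insert i B).card := (Finset.card_insert_of_notMem hiB).symm
          _ ≤ _ := Finset.card_le_card hsub
      omega
  intro a b hab
  by_contra hc
  push_neg at hc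
  have := key (r.symm b) (r.symm a) (Or.inl hc)
  simp only [Equiv.apply_symm_apply] at this
  have hba : b < a := this
  exact absurd hab (not_le.mpr hba)
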